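/- arXiv:2603.26149 — 2 statements merged into one kernel-verified Lean document; each statement's English description precedes it below -/
import Mathlib

section
/- Let B and B̃ be m×m real symmetric positive semidefinite matrices, let K, I be subspaces of ℝ^m with I ⊆ Im(B̃) and (ker(B) ∩ ker(B̃))^⊥ ∩ ker(B̃) ⊆ K ⊆ ker(B̃), let Π be the Euclidean orthogonal projector onto S = K ⊕ I, and let τ > 0. If (v − Π v)ᵀ B (v − Π v) ≤ τ vᵀ B̃ v for every v ∈ Im(B̃), then (u − Π u)ᵀ B (u − Π u) ≤ τ uᵀ B̃ u for every u ∈ ℝ^m. -/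
/-!
Split `u = v + w` with `v ∈ Im(B̃)` and `w ∈ ker(B̃)`. Since `K ⊆ ker(B̃) ⊥ I` and `w ⊥ I`, the
projector acts on `w` as the projector onto `K`, so `w - Π w ∈ ker(B̃) ∩ K^⊥`. The lower bound on
`K` forces `ker(B̃) ∩ K^⊥ ⊆ ker(B) ∩ ker(B̃)`, hence `u - Π u` differs from `v - Π v` by a vector
of `ker(B)`, while `uᵀ B̃ u = vᵀ B̃ v`.
-/

open Matrix RealInnerProductSpace

/-- The quadratic form `x ↦ xᵀ M x` associated with a real matrix, written with
the Euclidean inner product. -/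
noncomputable def quadForm {m : ℕ} (M : Matrix (Fin m) (Fin m) ℝ)
    (x : EuclideanSpace ℝ (Fin m)) : ℝ :=
  ⟪(Matrix.toEuclideanLin M) x, x⟫

namespace Submodule

variable {𝕜 E : Type*} [RCLike 𝕜] [NormedAddCommGroup E] [InnerProductSpace 𝕜 E]

theorem starProjection_sup_of_mem_orthogonal {K I : Submodule 𝕜 E} [K.HasOrthogonalProjection]
    [(K ⊔ I).HasOrthogonalProjection] (hKI : K ≤ Iᗮ) {w : E} (hw : w ∈ Iᗮ) :
    (K ⊔ I).starProjection w = K.starProjection w := by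
  refine eq_starProjection_of_mem_orthogonal (mem_sup_left (K.starProjection_apply_mem w)) ?_
  rw [← inf_orthogonal]
  exact ⟨K.sub_starProjection_mem_orthogonal w,
    Iᗮ.sub_mem hw (hKI (K.starProjection_apply_mem w))⟩

theorem inf_orthogonal_le_of_orthogonal_inf_le {N L K : Submodule 𝕜 E}
    [N.HasOrthogonalProjection] (hNL : N ≤ L) (hK : Nᗮ ⊓ L ≤ K) : L ⊓ Kᗮ ≤ N := by
  rintro x ⟨hxL, hxK⟩
  set y := x - N.starProjection x
  have hyK : y ∈ K := hK ⟨N.sub_starProjection_mem_orthogonal x,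
    L.sub_mem hxL (hNL (N.starProjection_apply_mem x))⟩
  have hyy : inner 𝕜 y y = 0 := by
    rw [inner_sub_right, inner_right_of_mem_orthogonal hyK hxK,
      inner_left_of_mem_orthogonal (N.starProjection_apply_mem x)
        (N.sub_starProjection_mem_orthogonal x), sub_zero]
  rw [← starProjection_eq_self_iff, eq_comm, ← sub_eq_zero]
  exact inner_self_eq_zero.mp hyy

end Submodule

theorem quadForm_add_of_mem_ker {m : ℕ} {M : Matrix (Fin m) (Fin m) ℝ} (hM : M.IsHermitian)
    (x : EuclideanSpace ℝ (Fin m)) {q : EuclideanSpace ℝ (Fin m)}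
    (hq : q ∈ LinearMap.ker (Matrix.toEuclideanLin M)) :
    quadForm M (x + q) = quadForm M x := by
  have hq' : Matrix.toEuclideanLin M q = 0 := hq
  have hqx : ⟪Matrix.toEuclideanLin M x, q⟫ = 0 := by
    rw [isSymmetric_toEuclideanLin_iff.mpr hM x q, hq', inner_zero_right]
  simp only [quadForm, map_add, hq', add_zero, inner_add_right, hqx]

theorem image_estimate_implies_global_estimate_general {m : ℕ}
    (B Bt : Matrix (Fin m) (Fin m) ℝ)
    (hB : B.PosSemidef) (hBt : Bt.PosSemidef)
    (K I : Submodule ℝ (EuclideanSpace ℝ (Fin m)))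
    (hI : I ≤ LinearMap.range (Matrix.toEuclideanLin Bt))
    (hK1 : ((LinearMap.ker (Matrix.toEuclideanLin B) ⊓
        LinearMap.ker (Matrix.toEuclideanLin Bt))ᗮ ⊓
        LinearMap.ker (Matrix.toEuclideanLin Bt)) ≤ K)
    (hK2 : K ≤ LinearMap.ker (Matrix.toEuclideanLin Bt))
    (τ : ℝ)
    (himage : ∀ v ∈ LinearMap.range (Matrix.toEuclideanLin Bt),
      quadForm B (v - (Submodule.orthogonalProjection (K ⊔ I) v : EuclideanSpace ℝ (Fin m))) ≤
        τ * quadForm Bt v) :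
    ∀ u : EuclideanSpace ℝ (Fin m),
      quadForm B (u - (Submodule.orthogonalProjection (K ⊔ I) u : EuclideanSpace ℝ (Fin m))) ≤
        τ * quadForm Bt u := by
  intro u
  simp only [Submodule.coe_orthogonalProjectionOnto_apply] at himage ⊢
  set L := LinearMap.ker (Matrix.toEuclideanLin Bt)
  have hL : (LinearMap.range (Matrix.toEuclideanLin Bt))ᗮ = L :=
    (isSymmetric_toEuclideanLin_iff.mpr hBt.1).orthogonal_range
  set w := L.starProjection u
  have hwL : w ∈ L := L.starProjection_apply_mem u
  have hv : u - w ∈ LinearMap.range (Matrix.toEuclideanLin Bt) := by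
    rw [← Submodule.orthogonal_orthogonal (LinearMap.range _), hL]
    exact L.sub_starProjection_mem_orthogonal u
  have hLI : L ≤ Iᗮ := hL ▸ Submodule.orthogonal_le hI
  have hPw : (K ⊔ I).starProjection w = K.starProjection w :=
    Submodule.starProjection_sup_of_mem_orthogonal (hK2.trans hLI) (hLI hwL)
  have hn : w - K.starProjection w ∈ LinearMap.ker (Matrix.toEuclideanLin B) :=
    (Submodule.inf_orthogonal_le_of_orthogonal_inf_le inf_le_right hK1
      ⟨L.sub_mem hwL (hK2 (K.starProjection_apply_mem w)),
        K.sub_starProjection_mem_orthogonal w⟩).1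
  calc quadForm B (u - (K ⊔ I).starProjection u)
      = quadForm B (u - w - (K ⊔ I).starProjection (u - w) + (w - K.starProjection w)) := by
        rw [map_sub, hPw]; abel_nf
    _ = quadForm B (u - w - (K ⊔ I).starProjection (u - w)) := quadForm_add_of_mem_ker hB.1 _ hn
    _ ≤ τ * quadForm Bt (u - w) := himage _ hv
    _ = τ * quadForm Bt u := by rw [← quadForm_add_of_mem_ker hBt.1 _ hwL, sub_add_cancel]

/-- if `(v − Π v)ᵀ B (v − Π v) ≤ τ vᵀ B̃ v` for every `v ∈ Im(B̃)`, then
`(u − Π u)ᵀ B (u − Π u) ≤ τ uᵀ B̃ u` for every `u ∈ ℝᵐ`. -/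
theorem image_estimate_implies_global_estimate {m : ℕ}
    (B Bt : Matrix (Fin m) (Fin m) ℝ)
    (hB : B.PosSemidef) (hBt : Bt.PosSemidef)
    (K I : Submodule ℝ (EuclideanSpace ℝ (Fin m)))
    (hI : I ≤ LinearMap.range (Matrix.toEuclideanLin Bt))
    (hK1 : ((LinearMap.ker (Matrix.toEuclideanLin B) ⊓
        LinearMap.ker (Matrix.toEuclideanLin Bt))ᗮ ⊓
        LinearMap.ker (Matrix.toEuclideanLin Bt)) ≤ K)
    (hK2 : K ≤ LinearMap.ker (Matrix.toEuclideanLin Bt))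
    (τ : ℝ) (hτ : 0 < τ)
    (himage : ∀ v ∈ LinearMap.range (Matrix.toEuclideanLin Bt),
      quadForm B (v - (Submodule.orthogonalProjection (K ⊔ I) v : EuclideanSpace ℝ (Fin m))) ≤
        τ * quadForm Bt v) :
    ∀ u : EuclideanSpace ℝ (Fin m),
      quadForm B (u - (Submodule.orthogonalProjection (K ⊔ I) u : EuclideanSpace ℝ (Fin m))) ≤
        τ * quadForm Bt u :=
  image_estimate_implies_global_estimate_general B Bt hB hBt K I hI hK1 hK2 τ himage
end

section
/- Let Ã and S be n×n real symmetric positive semidefinite matrices such that xᵀ S x ≤ M xᵀ Ã x for all x ∈ ℝⁿ, for some constant M > 0. Let T, T̂ ∈ ℝ^{n×n^c} satisfy Tᵀ Ã T = I_{n^c} and T̂ᵀ Ã T̂ = I_{n^c}, with associated Ã-orthogonal projectors Π = T Tᵀ Ã and Π̂ = T̂ T̂ᵀ Ã. Suppose further that for some τ > 0 the approximation property (v − Π v)ᵀ S (v − Π v) ≤ τ vᵀ Ã v holds for all v ∈ ℝⁿ. Then for every v ∈ ℝⁿ, (v − Π̂ v)ᵀ S (v − Π̂ v) ≤ (2τ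 + 4 M (n^c − ‖T̂ᵀ Ã T‖_F²)) · vᵀ Ã v, where ‖·‖_F denotes the Frobenius norm. -/
open Matrix

/-- Squared Frobenius norm of a real matrix. -/
noncomputable def frobSq {a b : ℕ} (M : Matrix (Fin a) (Fin b) ℝ) : ℝ :=
  ∑ i, ∑ j, (M i j) ^ 2

/-!
Factor `Ã = Lᵀ L`. With `Q = L T`, `Q̂ = L T̂` (orthonormal columns) and `u = L v`, the
`Ã`-norm of `(Π - Π̂) v` is the Euclidean norm of `(Q Qᵀ - Q̂ Q̂ᵀ) u`. Writing `G = Q̂ᵀ Q`,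
this vector splits into the orthogonal pieces `(Q - Q̂ G) Qᵀ u` and `Q̂ (Q̂ - Q Gᵀ)ᵀ u`, and
both `Q - Q̂ G` and `Q̂ - Q Gᵀ` have squared Frobenius norm `n^c - ‖G‖_F²`; Cauchy–Schwarz
row by row and Bessel's inequality give `‖(Π - Π̂) v‖_Ã² ≤ 2 (n^c - ‖G‖_F²) ‖v‖_Ã²`.
Finally `v - Π̂ v = (v - Π v) + (Π - Π̂) v`, the parallelogram law for the seminorm of `S`,
and `S ≤ M Ã` give the constant `2τ + 4 M (n^c - ‖G‖_F²)`.
-/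

theorem Matrix.mulVec_dotProduct_mulVec {m n p R : Type*} [Fintype m] [Fintype n] [Fintype p]
    [CommSemiring R] (X : Matrix m n R) (Y : Matrix m p R) (a : n → R) (b : p → R) :
    X *ᵥ a ⬝ᵥ Y *ᵥ b = a ⬝ᵥ (Xᵀ * Y) *ᵥ b := by
  rw [← mulVec_mulVec, dotProduct_mulVec a, vecMul_transpose]

open scoped MatrixOrder in
theorem Matrix.PosSemidef.exists_eq_transpose_mul_self {n : Type*} [Fintype n]
    {A : Matrix n n ℝ} (hA : A.PosSemidef) : ∃ L : Matrix n n ℝ, A = Lᵀ * L := by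
  classical
  obtain ⟨L, rfl⟩ := CStarAlgebra.nonneg_iff_eq_star_mul_self.mp hA.nonneg
  exact ⟨L, by rw [star_eq_conjTranspose, conjTranspose_eq_transpose_of_trivial]⟩

theorem Matrix.PosSemidef.add_dotProduct_mulVec_add_le {n : Type*} [Fintype n]
    {S : Matrix n n ℝ} (hS : S.PosSemidef) (x y : n → ℝ) :
    (x + y) ⬝ᵥ S *ᵥ (x + y) ≤ 2 * (x ⬝ᵥ S *ᵥ x) + 2 * (y ⬝ᵥ S *ᵥ y) := by
  have hdiff : 0 ≤ (x - y) ⬝ᵥ S *ᵥ (x - y) := by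
    simpa using hS.dotProduct_mulVec_nonneg (x - y)
  have hparallelogram : (x + y) ⬝ᵥ S *ᵥ (x + y) + (x - y) ⬝ᵥ S *ᵥ (x - y) =
      2 * (x ⬝ᵥ S *ᵥ x) + 2 * (y ⬝ᵥ S *ᵥ y) := by
    simp only [mulVec_add, mulVec_sub, dotProduct_add, dotProduct_sub, add_dotProduct,
      sub_dotProduct]
    ring
  linarith

section FrobeniusNorm

variable {a b : ℕ}

theorem frobSq_nonneg (C : Matrix (Fin a) (Fin b) ℝ) : 0 ≤ frobSq C :=
  Finset.sum_nonneg fun _ _ => Finset.sum_nonneg fun _ _ => sq_nonneg _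

theorem frobSq_transpose (C : Matrix (Fin a) (Fin b) ℝ) : frobSq Cᵀ = frobSq C :=
  Finset.sum_comm

theorem frobSq_eq_trace (C : Matrix (Fin a) (Fin b) ℝ) : frobSq C = (Cᵀ * C).trace := by
  rw [frobSq, Finset.sum_comm]
  simp [trace, mul_apply, sq]

theorem mulVec_dotProduct_mulVec_self_le (C : Matrix (Fin a) (Fin b) ℝ) (u : Fin b → ℝ) :
    C *ᵥ u ⬝ᵥ C *ᵥ u ≤ frobSq C * (u ⬝ᵥ u) := by
  rw [frobSq, dotProduct, Finset.sum_mul]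
  refine Finset.sum_le_sum fun i _ => ?_
  simpa only [mulVec, dotProduct, sq] using Finset.sum_mul_sq_le_sq_mul_sq Finset.univ (C i) u

end FrobeniusNorm

section OrthonormalColumns

variable {n k : ℕ} {Q Q' : Matrix (Fin n) (Fin k) ℝ}

theorem transpose_mulVec_dotProduct_self_le (hQ : Qᵀ * Q = 1) (u : Fin n → ℝ) :
    Qᵀ *ᵥ u ⬝ᵥ Qᵀ *ᵥ u ≤ u ⬝ᵥ u := by
  set c := Qᵀ *ᵥ u
  have hQc : Q *ᵥ c ⬝ᵥ u = c ⬝ᵥ c := by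
    rw [dotProduct_comm, dotProduct_mulVec, ← mulVec_transpose]
  have hQcQc : Q *ᵥ c ⬝ᵥ Q *ᵥ c = c ⬝ᵥ c := by rw [mulVec_dotProduct_mulVec, hQ, one_mulVec]
  have hnonneg : 0 ≤ (u - Q *ᵥ c) ⬝ᵥ (u - Q *ᵥ c) := by
    simpa using dotProduct_self_star_nonneg (u - Q *ᵥ c)
  simp only [dotProduct_sub, sub_dotProduct, hQcQc, hQc, dotProduct_comm u] at hnonneg
  linarith

theorem frobSq_sub_mul_transpose_mul (hQ : Qᵀ * Q = 1) (hQ' : Q'ᵀ * Q' = 1) :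
    frobSq (Q - Q' * (Q'ᵀ * Q)) = k - frobSq (Q'ᵀ * Q) := by
  set G := Q'ᵀ * Q
  have hGt : Qᵀ * Q' = Gᵀ := by rw [transpose_mul, transpose_transpose]
  have hgram : (Q - Q' * G)ᵀ * (Q - Q' * G) = 1 - Gᵀ * G := by
    simp only [transpose_sub, transpose_mul, Matrix.sub_mul, Matrix.mul_sub, Matrix.mul_assoc]
    rw [← Matrix.mul_assoc Qᵀ, hGt, ← Matrix.mul_assoc Q'ᵀ Q', hQ', Matrix.one_mul, hQ]
    abel
  rw [frobSq_eq_trace, hgram, trace_sub, trace_one, frobSq_eq_trace, Fintype.card_fin]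

theorem mul_transpose_sub_mul_transpose_mulVec_dotProduct_self_le (hQ : Qᵀ * Q = 1)
    (hQ' : Q'ᵀ * Q' = 1) (u : Fin n → ℝ) :
    (Q * Qᵀ - Q' * Q'ᵀ) *ᵥ u ⬝ᵥ (Q * Qᵀ - Q' * Q'ᵀ) *ᵥ u ≤
      2 * (k - frobSq (Q'ᵀ * Q)) * (u ⬝ᵥ u) := by
  set G := Q'ᵀ * Q
  set E := Q - Q' * G
  set F := Q' - Q * (Qᵀ * Q')
  have hGt : Qᵀ * Q' = Gᵀ := by rw [transpose_mul, transpose_transpose]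
  have hEF : Q * Qᵀ - Q' * Q'ᵀ = E * Qᵀ - Q' * Fᵀ := by
    simp only [E, F, G, transpose_sub, transpose_mul, transpose_transpose, Matrix.sub_mul,
      Matrix.mul_sub, Matrix.mul_assoc]
    abel
  have hEQ' : Eᵀ * Q' = 0 := by
    rw [transpose_sub, transpose_mul, Matrix.sub_mul, hGt, Matrix.mul_assoc, hQ', Matrix.mul_one,
      sub_self]
  have hfrobE : frobSq E = k - frobSq G := frobSq_sub_mul_transpose_mul hQ hQ'
  have hfrobF : frobSq Fᵀ = k - frobSq G := by
    rw [frobSq_transpose, frobSq_sub_mul_transpose_mul hQ' hQ, hGt, frobSq_transpose]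
  set c := Qᵀ *ᵥ u
  set y := Fᵀ *ᵥ u
  have hpythagoras : (E * Qᵀ - Q' * Fᵀ) *ᵥ u ⬝ᵥ (E * Qᵀ - Q' * Fᵀ) *ᵥ u =
      E *ᵥ c ⬝ᵥ E *ᵥ c + y ⬝ᵥ y := by
    have hcross : E *ᵥ c ⬝ᵥ Q' *ᵥ y = 0 := by
      rw [mulVec_dotProduct_mulVec, hEQ', zero_mulVec, dotProduct_zero]
    have hQ'y : Q' *ᵥ y ⬝ᵥ Q' *ᵥ y = y ⬝ᵥ y := by rw [mulVec_dotProduct_mulVec, hQ', one_mulVec]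
    rw [Matrix.sub_mulVec, ← mulVec_mulVec, ← mulVec_mulVec, dotProduct_sub, sub_dotProduct,
      sub_dotProduct, dotProduct_comm (Q' *ᵥ y), hcross, hQ'y]
    ring
  have hE : E *ᵥ c ⬝ᵥ E *ᵥ c ≤ (k - frobSq G) * (u ⬝ᵥ u) :=
    calc E *ᵥ c ⬝ᵥ E *ᵥ c ≤ frobSq E * (c ⬝ᵥ c) := mulVec_dotProduct_mulVec_self_le E c
      _ ≤ (k - frobSq G) * (u ⬝ᵥ u) := by
        rw [hfrobE]
        exact mul_le_mul_of_nonneg_left (transpose_mulVec_dotProduct_self_le hQ u)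
          (hfrobE ▸ frobSq_nonneg E)
  have hy : y ⬝ᵥ y ≤ (k - frobSq G) * (u ⬝ᵥ u) :=
    hfrobF ▸ mulVec_dotProduct_mulVec_self_le Fᵀ u
  rw [hEF, hpythagoras]
  linarith

end OrthonormalColumns

theorem projection_sub_projection_quadForm_le {n k : ℕ} {A : Matrix (Fin n) (Fin n) ℝ}
    (hA : A.PosSemidef) {T T' : Matrix (Fin n) (Fin k) ℝ} (hT : Tᵀ * A * T = 1)
    (hT' : T'ᵀ * A * T' = 1) (v : Fin n → ℝ) :
    (T * Tᵀ * A - T' * T'ᵀ * A) *ᵥ v ⬝ᵥ A *ᵥ ((T * Tᵀ * A - T' * T'ᵀ * A) *ᵥ v) ≤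
      2 * (k - frobSq (T'ᵀ * A * T)) * (v ⬝ᵥ A *ᵥ v) := by
  obtain ⟨L, rfl⟩ := hA.exists_eq_transpose_mul_self
  have hgram (X Y : Matrix (Fin n) (Fin k) ℝ) : (L * X)ᵀ * (L * Y) = Xᵀ * (Lᵀ * L) * Y := by
    simp only [transpose_mul, Matrix.mul_assoc]
  have hquad (x : Fin n → ℝ) : x ⬝ᵥ (Lᵀ * L) *ᵥ x = L *ᵥ x ⬝ᵥ L *ᵥ x :=
    (mulVec_dotProduct_mulVec L L x x).symm
  have hL : L * (T * Tᵀ * (Lᵀ * L) - T' * T'ᵀ * (Lᵀ * L)) =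
      ((L * T) * (L * T)ᵀ - (L * T') * (L * T')ᵀ) * L := by
    simp only [transpose_mul, Matrix.mul_sub, Matrix.sub_mul, Matrix.mul_assoc]
  rw [hquad, hquad, mulVec_mulVec, hL, ← mulVec_mulVec, ← hgram]
  exact mul_transpose_sub_mul_transpose_mulVec_dotProduct_self_le (by rwa [hgram])
    (by rwa [hgram]) _

theorem approximate_coarse_space_estimate_general {n nc : ℕ}
    (A S : Matrix (Fin n) (Fin n) ℝ)
    (hA : A.PosSemidef) (hS : S.PosSemidef)
    (M : ℝ) (hM : 0 < M)
    (hdom : ∀ x : Fin n → ℝ, x ⬝ᵥ S.mulVec x ≤ M * (x ⬝ᵥ A.mulVec x))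
    (T That : Matrix (Fin n) (Fin nc) ℝ)
    (hT : Tᵀ * A * T = 1) (hThat : Thatᵀ * A * That = 1)
    (τ : ℝ)
    (happrox : ∀ v : Fin n → ℝ,
      (v - (T * Tᵀ * A).mulVec v) ⬝ᵥ S.mulVec (v - (T * Tᵀ * A).mulVec v) ≤
        τ * (v ⬝ᵥ A.mulVec v)) :
    ∀ v : Fin n → ℝ,
      (v - (That * Thatᵀ * A).mulVec v) ⬝ᵥ
          S.mulVec (v - (That * Thatᵀ * A).mulVec v) ≤
        (2 * τ + 4 * M * ((nc : ℝ) - frobSq (Thatᵀ * A * T))) *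
          (v ⬝ᵥ A.mulVec v) := by
  intro v
  set d := (T * Tᵀ * A - That * Thatᵀ * A) *ᵥ v
  have hsplit : v - (That * Thatᵀ * A) *ᵥ v = (v - (T * Tᵀ * A) *ᵥ v) + d := by
    simp only [d, Matrix.sub_mulVec]; abel
  calc _ ≤ 2 * ((v - (T * Tᵀ * A) *ᵥ v) ⬝ᵥ S *ᵥ (v - (T * Tᵀ * A) *ᵥ v)) +
          2 * (d ⬝ᵥ S *ᵥ d) :=
        hsplit ▸ hS.add_dotProduct_mulVec_add_le _ _
    _ ≤ 2 * (τ * (v ⬝ᵥ A *ᵥ v)) + 2 * (M * (d ⬝ᵥ A *ᵥ d)) := by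
        gcongr
        exacts [happrox v, hdom d]
    _ ≤ 2 * (τ * (v ⬝ᵥ A *ᵥ v)) +
          2 * (M * (2 * (nc - frobSq (Thatᵀ * A * T)) * (v ⬝ᵥ A *ᵥ v))) := by
        gcongr
        exact projection_sub_projection_quadForm_le hA hT hThat v
    _ = _ := by ring

/-- the key local estimate. If the exact coarse space satisfies the
approximation property with constant `τ`, then the approximate coarse space satisfies
it with constant `2τ + 4 M (n^c − ‖T̂ᵀ Ã T‖_F²)`. -/
theorem approximate_coarse_space_estimate {n nc : ℕ}
    (A S : Matrix (Fin n) (Fin n) ℝ)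
    (hA : A.PosSemidef) (hS : S.PosSemidef)
    (M : ℝ) (hM : 0 < M)
    (hdom : ∀ x : Fin n → ℝ, x ⬝ᵥ S.mulVec x ≤ M * (x ⬝ᵥ A.mulVec x))
    (T That : Matrix (Fin n) (Fin nc) ℝ)
    (hT : Tᵀ * A * T = 1) (hThat : Thatᵀ * A * That = 1)
    (τ : ℝ) (hτ : 0 < τ)
    (happrox : ∀ v : Fin n → ℝ,
      (v - (T * Tᵀ * A).mulVec v) ⬝ᵥ S.mulVec (v - (T * Tᵀ * A).mulVec v) ≤
        τ * (v ⬝ᵥ A.mulVec v)) :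
    ∀ v : Fin n → ℝ,
      (v - (That * Thatᵀ * A).mulVec v) ⬝ᵥ
          S.mulVec (v - (That * Thatᵀ * A).mulVec v) ≤
        (2 * τ + 4 * M * ((nc : ℝ) - frobSq (Thatᵀ * A * T))) *
          (v ⬝ᵥ A.mulVec v) :=
  approximate_coarse_space_estimate_general A S hA hS M hM hdom T That hT hThat τ happrox
end
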